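/- arXiv:math-ph/0411035 — 4 statements merged into one kernel-verified Lean document; each statement's English description precedes it below -/
import Mathlib

section
/- Let S be a unital subalgebra of M₂ which is commutative and maximal abelian, in the sense that every element of M₂ commuting with all elements of S belongs to S. If every element of S is fixed by the parity automorphism (Θ(x) = x for all x ∈ S), then S equals the diagonal subalgebra of M₂, i.e. the subalgebra generated by the two projections a * star a and star a * a. -/
namespace CARMarkov

noncomputable def a : Matrix (Fin 2) (Fin 2) ℂ := !![0,1;0,0]

noncomputable def σz : Matrix (Fin 2) (Fin 2) ℂ := !![1,0;0,-1]

noncomputable def Θ (x : Matrix (Fin 2) (Fin 2) ℂ) : Matrix (Fin 2) (Fin 2) ℂ :=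
  σz * x * σz

lemma σz_sq : σz * σz = 1 := by
  simp [σz, Matrix.mul_fin_two, Matrix.one_fin_two]

lemma e11_eq : a * star a = !![1,0;0,0] := by
  ext i j
  fin_cases i <;> fin_cases j <;>
    simp [a, Matrix.mul_apply, Fin.sum_univ_two, Matrix.star_apply]

lemma e22_eq : star a * a = !![0,0;0,1] := by
  ext i j
  fin_cases i <;> fin_cases j <;>
    simp [a, Matrix.mul_apply, Fin.sum_univ_two, Matrix.star_apply]

/-- The unique parity-invariant maximal abelian (unital) subalgebra of `M₂` is the
diagonal subalgebra generated by the projections `a * star a` and `star a * a`. -/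
theorem parity_invariant_masa_eq_diagonal
    (S : Subalgebra ℂ (Matrix (Fin 2) (Fin 2) ℂ))
    (hcomm : ∀ x ∈ S, ∀ y ∈ S, x * y = y * x)
    (hmax : ∀ y : Matrix (Fin 2) (Fin 2) ℂ, (∀ x ∈ S, y * x = x * y) → y ∈ S)
    (hΘ : ∀ x ∈ S, Θ x = x) :
    S = Algebra.adjoin ℂ {a * star a, star a * a} := by
  have hσ : ∀ x ∈ S, σz * x = x * σz := by
    intro x hx
    have h := hΘ x hx
    unfold Θ at h
    calc σz * x = σz * x * (σz * σz) := by rw [σz_sq, mul_one]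
      _ = (σz * x * σz) * σz := by rw [mul_assoc, mul_assoc, mul_assoc]
      _ = x * σz := by rw [h]
  have hσS : σz ∈ S := hmax σz hσ
  have h11 : (a * star a) ∈ Algebra.adjoin ℂ ({a * star a, star a * a} : Set _) :=
    Algebra.subset_adjoin (by simp)
  have h22 : (star a * a) ∈ Algebra.adjoin ℂ ({a * star a, star a * a} : Set _) :=
    Algebra.subset_adjoin (by simp)
  apply le_antisymm
  · intro x hx
    have hc := hcomm x hx σz hσS
    have h01 : x 0 1 = 0 := by
      have h := congrFun (congrFun hc 0) 1
      simp [σz, Matrix.mul_apply, Fin.sum_univ_two] at h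
      linear_combination -h / 2
    have h10 : x 1 0 = 0 := by
      have h := congrFun (congrFun hc 1) 0
      simp [σz, Matrix.mul_apply, Fin.sum_univ_two] at h
      linear_combination h / 2
    have hx' : x = x 0 0 • (a * star a) + x 1 1 • (star a * a) := by
      rw [e11_eq, e22_eq]
      ext i j
      fin_cases i <;> fin_cases j <;> simp [h01, h10]
    rw [hx']
    exact add_mem (Subalgebra.smul_mem _ h11 _) (Subalgebra.smul_mem _ h22 _)
  · apply Algebra.adjoin_le
    rintro y hy
    have h11S : (!![1,0;0,0] : Matrix (Fin 2) (Fin 2) ℂ) ∈ S := by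
      have he : (!![1,0;0,0] : Matrix (Fin 2) (Fin 2) ℂ) = (2⁻¹ : ℂ) • ((1 : Matrix (Fin 2) (Fin 2) ℂ) + σz) := by
        ext i j
        fin_cases i <;> fin_cases j <;> norm_num [σz, Matrix.one_fin_two]
      rw [he]
      exact S.smul_mem (S.add_mem S.one_mem hσS) _
    have h22S : (!![0,0;0,1] : Matrix (Fin 2) (Fin 2) ℂ) ∈ S := by
      have he : (!![0,0;0,1] : Matrix (Fin 2) (Fin 2) ℂ) = (2⁻¹ : ℂ) • ((1 : Matrix (Fin 2) (Fin 2) ℂ) - σz) := by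
        ext i j
        fin_cases i <;> fin_cases j <;> norm_num [σz, Matrix.one_fin_two]
      rw [he]
      exact S.smul_mem (S.sub_mem S.one_mem hσS) _
    rcases hy with rfl | rfl
    · rw [e11_eq]; exact h11S
    · rw [e22_eq]; exact h22S

end CARMarkov
end

section
/- Let (a, b) be a CAR pair in a unital complex Banach *-algebra R and let α, β, γ, δ, h ∈ ℝ. Define B(α,β,γ,δ) := α • (star a * a)(star b * b) + β • (a * star a)(star b * b) + γ • (star a * a)(b * star b) + δ • (a * star a)(b * star b). Then exp(h • B(α,β,γ,δ)) = B(e^{hα}, e^{hβ}, e^{hγ}, e^{hδ}). -/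
namespace CARMarkov

/-- A CAR pair in a unital *-algebra: two anticommuting fermionic generators. -/
structure IsCARPair {R : Type*} [Ring R] [StarRing R] (a b : R) : Prop where
  sq_a : a * a = 0
  sq_b : b * b = 0
  car_a : star a * a + a * star a = 1
  car_b : star b * b + b * star b = 1
  anti_ab : a * b + b * a = 0
  anti_a_bstar : a * star b + star b * a = 0
  anti_astar_b : star a * b + b * star a = 0
  anti_astar_bstar : star a * star b + star b * star a = 0

/-- The diagonal operator `B(α,β,γ,δ)` of Example 6.1 of the paper. -/
noncomputable def B {R : Type*} [Ring R] [Algebra ℂ R] [StarRing R]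
    (a b : R) (α β γ δ : ℝ) : R :=
  (α : ℂ) • ((star a * a) * (star b * b)) + (β : ℂ) • ((a * star a) * (star b * b))
    + (γ : ℂ) • ((star a * a) * (b * star b)) + (δ : ℂ) • ((a * star a) * (b * star b))

end CARMarkov

/-!
The four products of `star a * a`, `a * star a` with `star b * b`, `b * star b` commute (each of
`a`, `star a` anticommutes with both `b` and `star b`, hence commutes with their products) and
form a complete family of orthogonal idempotents; `B(α,β,γ,δ)` is the diagonal combination of
them with coefficients `α, β, γ, δ`. For such a combination `(∑ cᵢ eᵢ)ⁿ = ∑ cᵢⁿ eᵢ` for every `n`,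
including `n = 0` by completeness, so the exponential series is summed coefficientwise.
-/

section OrthogonalIdempotents

variable {R I : Type*} [Fintype I] {e : I → R}

lemma CompleteOrthogonalIdempotents.sum_smul_pow {𝕜 : Type*} [CommSemiring 𝕜] [Semiring R]
    [Algebra 𝕜 R] (he : CompleteOrthogonalIdempotents e) (c : I → 𝕜) (n : ℕ) :
    (∑ i, c i • e i) ^ n = ∑ i, c i ^ n • e i := by
  classical
  induction n with
  | zero => simp [he.complete]
  | succ n ih => simp [pow_succ, ih, Finset.sum_mul_sum, he.mul_eq, smul_smul, mul_comm]

lemma CompleteOrthogonalIdempotents.exp_sum_smul {𝕜 : Type*} [RCLike 𝕜] [NormedRing R]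
    [NormedAlgebra 𝕜 R] [CompleteSpace R] (he : CompleteOrthogonalIdempotents e) (c : I → 𝕜) :
    NormedSpace.exp (∑ i, c i • e i) = ∑ i, NormedSpace.exp (c i) • e i := by
  refine (NormedSpace.exp_series_hasSum_exp' (𝕂 := 𝕜) _).unique ?_
  simp_rw [he.sum_smul_pow, Finset.smul_sum, smul_smul]
  exact hasSum_sum fun i _ ↦ (NormedSpace.exp_series_hasSum_exp' (𝕂 := 𝕜) (c i)).smul_const (e i)

lemma CompleteOrthogonalIdempotents.mul_of_commute {J : Type*} [Fintype J] [Semiring R]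
    {f : J → R} (he : CompleteOrthogonalIdempotents e) (hf : CompleteOrthogonalIdempotents f)
    (hef : ∀ i j, Commute (e i) (f j)) :
    CompleteOrthogonalIdempotents fun ij : I × J ↦ e ij.1 * f ij.2 := by
  refine ⟨⟨fun ⟨i, j⟩ ↦ ?_, fun ⟨i, j⟩ ⟨i', j'⟩ hne ↦ ?_⟩, ?_⟩
  · exact (he.idem i).mul_of_commute (hef i j) (hf.idem j)
  · change e i * f j * (e i' * f j') = 0
    rw [(hef i' j).symm.mul_mul_mul_comm]
    obtain hi | hj : i ≠ i' ∨ j ≠ j' := by simpa only [Ne, Prod.mk.injEq, not_and_or] using hne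
    · rw [he.ortho hi, zero_mul]
    · rw [hf.ortho hj, mul_zero]
  · rw [Fintype.sum_prod_type, ← Finset.sum_mul_sum, he.complete, hf.complete, one_mul]

end OrthogonalIdempotents

lemma commute_mul_of_anticommute {R : Type*} [Ring R] {y u v : R} (hu : y * u + u * y = 0)
    (hv : y * v + v * y = 0) : Commute y (u * v) := by
  rw [commute_iff_eq, ← mul_assoc, eq_neg_of_add_eq_zero_left hu, neg_mul, mul_assoc,
    eq_neg_of_add_eq_zero_left hv, mul_neg, neg_neg, mul_assoc]

namespace CARMarkov

def numberProjections {R : Type*} [Mul R] [Star R] (x : R) : Fin 2 → R :=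
  ![star x * x, x * star x]

section CARPair

variable {R : Type*} [Ring R] [StarRing R]

lemma completeOrthogonalIdempotents_numberProjections {x : R} (hsq : x * x = 0)
    (hcar : star x * x + x * star x = 1) :
    CompleteOrthogonalIdempotents (numberProjections x) := by
  refine CompleteOrthogonalIdempotents.pair_iff'ₛ.mpr ⟨?_, ?_, hcar⟩
  · rw [mul_assoc, ← mul_assoc x, hsq, zero_mul, mul_zero]
  · rw [mul_assoc, ← mul_assoc (star x), ← star_mul, hsq, star_zero, zero_mul, mul_zero]

variable {a b : R}

lemma IsCARPair.commute_numberProjections (hcar : IsCARPair a b) (i j : Fin 2) :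
    Commute (numberProjections a i) (numberProjections b j) := by
  have ha : Commute a (star b * b) := commute_mul_of_anticommute hcar.anti_a_bstar hcar.anti_ab
  have ha' : Commute a (b * star b) := commute_mul_of_anticommute hcar.anti_ab hcar.anti_a_bstar
  have hsa : Commute (star a) (star b * b) :=
    commute_mul_of_anticommute hcar.anti_astar_bstar hcar.anti_astar_b
  have hsa' : Commute (star a) (b * star b) :=
    commute_mul_of_anticommute hcar.anti_astar_b hcar.anti_astar_bstar
  fin_cases i <;> fin_cases j
  · exact hsa.mul_left ha
  · exact hsa'.mul_left ha'
  · exact ha.mul_left hsa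
  · exact ha'.mul_left hsa'

lemma IsCARPair.completeOrthogonalIdempotents (hcar : IsCARPair a b) :
    CompleteOrthogonalIdempotents fun ij : Fin 2 × Fin 2 ↦
      numberProjections a ij.1 * numberProjections b ij.2 :=
  (completeOrthogonalIdempotents_numberProjections hcar.sq_a hcar.car_a).mul_of_commute
    (completeOrthogonalIdempotents_numberProjections hcar.sq_b hcar.car_b)
    hcar.commute_numberProjections

lemma B_eq_sum [Algebra ℂ R] (α β γ δ : ℝ) :
    B a b α β γ δ = ∑ ij : Fin 2 × Fin 2,
      (!![α, γ; β, δ] ij.1 ij.2 : ℂ) • (numberProjections a ij.1 * numberProjections b ij.2) := by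
  simp only [B, numberProjections, Fintype.sum_prod_type, Fin.sum_univ_two, Matrix.of_apply,
    Matrix.cons_val', Matrix.cons_val_fin_one, Matrix.cons_val_zero, Matrix.cons_val_one]
  abel

end CARPair

/-- The exponential of `h • B(α,β,γ,δ)` is `B(e^{hα}, e^{hβ}, e^{hγ}, e^{hδ})`. -/
theorem exp_B {R : Type*} [NormedRing R] [NormedAlgebra ℂ R] [CompleteSpace R]
    [StarRing R] (a b : R) (hcar : IsCARPair a b) (α β γ δ h : ℝ) :
    NormedSpace.exp ((h : ℂ) • B a b α β γ δ)
      = B a b (Real.exp (h * α)) (Real.exp (h * β))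
          (Real.exp (h * γ)) (Real.exp (h * δ)) := by
  rw [B_eq_sum, B_eq_sum, Finset.smul_sum]
  simp_rw [smul_smul]
  rw [hcar.completeOrthogonalIdempotents.exp_sum_smul]
  refine Finset.sum_congr rfl fun ⟨i, j⟩ _ ↦ ?_
  rw [← Complex.exp_eq_exp_ℂ, ← Complex.ofReal_mul, ← Complex.ofReal_exp]
  fin_cases i <;> fin_cases j <;> rfl

end CARMarkov
end

section
/- Let (a, b) be a CAR pair in a unital associative *-algebra R over ℂ and set U := star a * b + star b * a. Then U² = (star a * a)(b * star b) + (a * star a)(star b * b), and the two summands p := (star a * a)(b * star b) and q := (a * star a)(star b * b) are self-adjoint idempotents with p * q = 0 and q * p = 0. -/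
namespace CARMarkov

/-- For `U = star a * b + star b * a`, the square `U²` is the sum of the two
orthogonal self-adjoint idempotents `(star a * a)(b * star b)` and
`(a * star a)(star b * b)`. -/
theorem U_sq {R : Type*} [Ring R] [Algebra ℂ R] [StarRing R]
    (a b : R) (hcar : IsCARPair a b) :
    (star a * b + star b * a) * (star a * b + star b * a)
      = (star a * a) * (b * star b) + (a * star a) * (star b * b) ∧
    ((star a * a) * (b * star b)) * ((star a * a) * (b * star b))
      = (star a * a) * (b * star b) ∧
    star ((star a * a) * (b * star b)) = (star a * a) * (b * star b) ∧
    ((a * star a) * (star b * b)) * ((a * star a) * (star b * b))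
      = (a * star a) * (star b * b) ∧
    star ((a * star a) * (star b * b)) = (a * star a) * (star b * b) ∧
    ((star a * a) * (b * star b)) * ((a * star a) * (star b * b)) = 0 ∧
    ((a * star a) * (star b * b)) * ((star a * a) * (b * star b)) = 0 := by
  obtain ⟨r1, r2, ca, cb, h1, h2, h3, h4⟩ := hcar
  have hsa : star a * star a = 0 := by
    have := congrArg star r1; simpa [star_mul] using this
  have hsb : star b * star b = 0 := by
    have := congrArg star r2; simpa [star_mul] using this
  -- commutation of single generators with pairs
  have hc1 : a * (b * star b) = (b * star b) * a := by
    linear_combination (norm := noncomm_ring) h1 * star b - b * h2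
  have hc2 : star a * (b * star b) = (b * star b) * star a := by
    linear_combination (norm := noncomm_ring) h3 * star b - b * h4
  have hc3 : a * (star b * b) = (star b * b) * a := by
    linear_combination (norm := noncomm_ring) h2 * b - star b * h1
  have hc4 : star a * (star b * b) = (star b * b) * star a := by
    linear_combination (norm := noncomm_ring) h4 * b - star b * h3
  -- commutation of pairs
  have cAB' : (star a * a) * (b * star b) = (b * star b) * (star a * a) := by
    linear_combination (norm := noncomm_ring) star a * hc1 + hc2 * a
  have cA'B : (a * star a) * (star b * b) = (star b * b) * (a * star a) := by
    linear_combination (norm := noncomm_ring) a * hc4 + hc3 * star a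
  have cA'B' : (a * star a) * (b * star b) = (b * star b) * (a * star a) := by
    linear_combination (norm := noncomm_ring) a * hc2 + hc1 * star a
  have cAB : (star a * a) * (star b * b) = (star b * b) * (star a * a) := by
    linear_combination (norm := noncomm_ring) star a * hc3 + hc4 * a
  -- idempotents
  have idA : (star a * a) * (star a * a) = star a * a := by
    linear_combination (norm := noncomm_ring) (star a * a) * ca - star a * r1 * star a
  have idA' : (a * star a) * (a * star a) = a * star a := by
    linear_combination (norm := noncomm_ring) (a * star a) * ca - a * hsa * a
  have idB : (star b * b) * (star b * b) = star b * b := by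
    linear_combination (norm := noncomm_ring) (star b * b) * cb - star b * r2 * star b
  have idB' : (b * star b) * (b * star b) = b * star b := by
    linear_combination (norm := noncomm_ring) (b * star b) * cb - b * hsb * b
  -- orthogonality
  have oAA' : (star a * a) * (a * star a) = 0 := by
    linear_combination (norm := noncomm_ring) star a * r1 * star a
  have oA'A : (a * star a) * (star a * a) = 0 := by
    linear_combination (norm := noncomm_ring) a * hsa * a
  refine ⟨?_, ?_, ?_, ?_, ?_, ?_, ?_⟩
  · linear_combination (norm := noncomm_ring)
      star a * h3 * b - hsa * (b * b)
      + star b * h2 * a - hsb * (a * a)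
      + star a * b * h2 - star a * h1 * star b
      + h2 * (star a * b) - a * h4 * b
  · linear_combination (norm := noncomm_ring)
      - ((star a * a) * cAB' * (b * star b))
      + idA * ((b * star b) * (b * star b))
      + (star a * a) * idB'
  · rw [star_mul, star_mul, star_mul, star_star, star_star]
    linear_combination (norm := noncomm_ring) - cAB'
  · linear_combination (norm := noncomm_ring)
      - ((a * star a) * cA'B * (star b * b))
      + idA' * ((star b * b) * (star b * b))
      + (a * star a) * idB
  · rw [star_mul, star_mul, star_mul, star_star, star_star]
    linear_combination (norm := noncomm_ring) - cA'B
  · linear_combination (norm := noncomm_ring)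
      - ((star a * a) * cA'B' * (star b * b))
      + oAA' * ((b * star b) * (star b * b))
  · linear_combination (norm := noncomm_ring)
      - ((a * star a) * cAB * (b * star b))
      + oA'A * ((star b * b) * (b * star b))


end CARMarkov
end

section
/- Let (a, b) be a CAR pair in a unital associative *-algebra R over ℂ and set U := star a * b + star b * a. Then U³ = U, and consequently U^{2k} = U² and U^{2k+1} = U for every natural number k ≥ 1. -/
namespace CARMarkov

private lemma swap_rule {R : Type*} [Ring R] {x y : R} (h : x * y + y * x = 0) :
    (y * x = -(x * y)) ∧ ∀ z, y * (x * z) = -(x * (y * z)) := by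
  have h1 : y * x = -(x * y) := eq_neg_of_add_eq_zero_right h
  refine ⟨h1, fun z => ?_⟩
  rw [← mul_assoc, h1, ← mul_assoc, neg_mul]

private lemma sq_rule {R : Type*} [Ring R] {x : R} (h : x * x = 0) :
    ∀ z, x * (x * z) = 0 := fun z => by rw [← mul_assoc, h, zero_mul]

private lemma car_rule {R : Type*} [Ring R] {x y : R} (h : y * x + x * y = 1) :
    (x * y = 1 - y * x) ∧ ∀ z, x * (y * z) = z - y * (x * z) := by
  have h1 : x * y = 1 - y * x := eq_sub_of_add_eq' h
  refine ⟨h1, fun z => ?_⟩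
  rw [← mul_assoc, h1, sub_mul, one_mul, ← mul_assoc]

/-- For `U = star a * b + star b * a` one has `U³ = U`; hence all even powers
`U^{2k}` coincide with `U²` and all odd powers `U^{2k+1}` coincide with `U`
for `k ≥ 1`. -/
theorem U_pow {R : Type*} [Ring R] [Algebra ℂ R] [StarRing R]
    (a b : R) (hcar : IsCARPair a b) :
    (star a * b + star b * a) ^ 3 = star a * b + star b * a ∧
    ∀ k : ℕ, 1 ≤ k →
      (star a * b + star b * a) ^ (2 * k) = (star a * b + star b * a) ^ 2 ∧
      (star a * b + star b * a) ^ (2 * k + 1) = star a * b + star b * a := by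
  obtain ⟨haa, hbb, hca, hcb, hab, hasb, hsab, hsasb⟩ := hcar
  have hsasa : star a * star a = 0 := by rw [← star_mul, haa, star_zero]
  have hsbsb : star b * star b = 0 := by rw [← star_mul, hbb, star_zero]
  obtain ⟨s1, s1'⟩ := swap_rule hsasb
  obtain ⟨s2, s2'⟩ := car_rule hca
  obtain ⟨s3, s3'⟩ := swap_rule hasb
  have hsab' : star a * b + b * star a = 0 := hsab
  obtain ⟨s4, s4'⟩ := swap_rule hsab'
  obtain ⟨s5, s5'⟩ := car_rule hcb
  obtain ⟨s6, s6'⟩ := swap_rule hab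
  have q1 := sq_rule hsasa
  have q2 := sq_rule hsbsb
  have q3 := sq_rule haa
  have q4 := sq_rule hbb
  have h3 : (star a * b + star b * a) ^ 3 = star a * b + star b * a := by
    simp only [pow_succ, pow_zero, one_mul, mul_add, add_mul, mul_assoc,
      s1, s1', s2, s2', s3, s3', s4, s4', s5, s5', s6, s6',
      q1, q2, q3, q4, hsasa, hsbsb, haa, hbb,
      mul_neg, neg_mul, mul_zero, zero_mul, mul_sub, sub_mul, mul_one, one_mul,
      neg_neg, neg_zero, sub_zero, zero_sub, add_zero, zero_add, mul_add, add_mul]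

  set U := star a * b + star b * a with hU
  have heven : ∀ k : ℕ, 1 ≤ k → U ^ (2 * k) = U ^ 2 := by
    intro k hk
    induction k with
    | zero => omega
    | succ n ih =>
      rcases Nat.eq_zero_or_pos n with h | h
      · subst h; rfl
      · have : 2 * (n + 1) = 2 * n + 2 := by ring
        rw [this, pow_add, ih h, ← pow_add]
        show U ^ 4 = U ^ 2
        have : U ^ 4 = U ^ 3 * U := by rw [pow_succ]
        rw [this, h3, ← pow_two]
  refine ⟨h3, fun k hk => ⟨heven k hk, ?_⟩⟩
  rw [pow_succ, heven k hk, ← pow_succ]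
  exact h3


end CARMarkov
end
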